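/- Let (X,δ) be a hyperconvex diversity and let d be the metric induced by δ on X, d(x,y) := δ({x,y}). Then for all nonempty finite subsets A,B of X, D_δ(A,B) = inf{d(x,y) : x ∈ B_A, y ∈ B_B}. -/

import Mathlib

open scoped ENNReal

section CoreDefs

variable {Y : Type*}

/-- A distance space: symmetric, nonnegative, vanishing on the diagonal. -/
def IsDistance (d : Y → Y → ℝ) : Prop :=
  (∀ x y, 0 ≤ d x y) ∧ (∀ x y, d x y = d y x) ∧ ∀ x, d x x = 0

/-- The set `P_d` of functions dominating the distance `d`. -/
def Pd (d : Y → Y → ℝ) : Set (Y → ℝ) :=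
  {f | ∀ x y, d x y ≤ f x + f y}

/-- The tight span `T_d`: pointwise-minimal elements of `P_d`. -/
def Td (d : Y → Y → ℝ) : Set (Y → ℝ) :=
  {f | f ∈ Pd d ∧ ∀ g ∈ Pd d, g ≤ f → g = f}

/-- The sup-distance `d∞(f,g) = sup_x |f x - g x|`, valued in `[0,∞]`. -/
noncomputable def dInfty (f g : Y → ℝ) : ℝ≥0∞ :=
  ⨆ y, edist (f y) (g y)

/-- `κ(x) = {f ∈ T_d : f x = 0}`. -/
def kappa (d : Y → Y → ℝ) (x : Y) : Set (Y → ℝ) :=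
  {f | f ∈ Td d ∧ f x = 0}

/-- A pseudometric: symmetric, nonnegative, vanishing on the diagonal,
satisfying the triangle inequality. -/
def IsPseudometric (ρ : Y → Y → ℝ) : Prop :=
  (∀ x y, 0 ≤ ρ x y) ∧ (∀ x y, ρ x y = ρ y x) ∧ (∀ x, ρ x x = 0) ∧
  ∀ x y z, ρ x z ≤ ρ x y + ρ y z

/-- `M(d)`: the set of pseudometrics dominating `d`. -/
def Md (d : Y → Y → ℝ) : Set (Y → Y → ℝ) :=
  {ρ | IsPseudometric ρ ∧ ∀ x y, d x y ≤ ρ x y}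

end CoreDefs

section DivDefs

variable {X : Type*} [DecidableEq X]

/-- A diversity on `X`: a nonnegative function on finite subsets which
vanishes exactly on sets of at most one element and satisfies the diversity
triangle inequality. -/
def IsDiversity (δ : Finset X → ℝ) : Prop :=
  (∀ A, 0 ≤ δ A) ∧ (∀ A : Finset X, δ A = 0 ↔ A.card ≤ 1) ∧
  ∀ A B C : Finset X, B.Nonempty → δ (A ∪ C) ≤ δ (A ∪ B) + δ (B ∪ C)

/-- The distance `D_δ` on finite subsets associated to a diversity `δ`. -/
def Ddelta (δ : Finset X → ℝ) (A B : Finset X) : ℝ :=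
  max (δ (A ∪ B) - δ A - δ B) 0

/-- `P_δ` for a diversity `δ`. -/
def Pdelta (δ : Finset X → ℝ) : Set (Finset X → ℝ) :=
  {f | f ∅ = 0 ∧ ∀ Cc : Finset (Finset X), Cc.Nonempty →
    (∀ C ∈ Cc, C.Nonempty) → δ (Cc.sup id) ≤ ∑ C ∈ Cc, f C}

/-- The tight span `T_δ` of a diversity `δ`. -/
def Tdelta (δ : Finset X → ℝ) : Set (Finset X → ℝ) :=
  {f | f ∈ Pdelta δ ∧ ∀ g ∈ Pdelta δ, g ≤ f → g = f}

/-- The relaxation `P_δ^{(2)}` using only pairs of finite sets. -/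
def Pdelta2 (δ : Finset X → ℝ) : Set (Finset X → ℝ) :=
  {f | f ∅ = 0 ∧ ∀ A B : Finset X, δ (A ∪ B) ≤ f A + f B}

/-- The minimal elements `T_δ^{(2)}` of `P_δ^{(2)}`. -/
def Tdelta2 (δ : Finset X → ℝ) : Set (Finset X → ℝ) :=
  {f | f ∈ Pdelta2 δ ∧ ∀ g ∈ Pdelta2 δ, g ≤ f → g = f}

/-- `B_A = {x ∈ X : δ(A ∪ {x}) ≤ δ(A)}`. -/
def Bset (δ : Finset X → ℝ) (A : Finset X) : Set X :=
  {x | δ (A ∪ {x}) ≤ δ A}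

/-- A hyperconvex diversity. -/
def DivHyperconvex (δ : Finset X → ℝ) : Prop :=
  ∀ (ι : Type*) (A : ι → Finset X) (r : ι → ℝ), (∀ γ, 0 ≤ r γ) →
    (∀ G : Finset ι, G.Nonempty → δ (G.sup A) ≤ ∑ γ ∈ G, r γ) →
    ∃ z : X, ∀ γ, δ (A γ ∪ {z}) ≤ r γ

end DivDefs

/-!
Two applications of the diversity triangle inequality, through `{x}` and `{y}`, give
`δ(A ∪ B) ≤ δ(A) + δ{x, y} + δ(B)` for `x ∈ B_A`, `y ∈ B_B`, so `D_δ(A, B)` is a lower bound.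
It is attained: hyperconvexity applied to the balls `(A, δ A)` and `(B, δ B + D_δ(A, B))`
gives `x ∈ B_A` with `δ(B ∪ {x}) ≤ δ B + D_δ(A, B)`, and applied again to `(B, δ B)` and
`({x}, D_δ(A, B))` gives `y ∈ B_B` with `δ{x, y} ≤ D_δ(A, B)`.
-/

lemma ULift.bool_finset_nonempty_cases (G : Finset (ULift Bool)) (hG : G.Nonempty) :
    G = {⟨true⟩} ∨ G = {⟨false⟩} ∨ G = {⟨true⟩, ⟨false⟩} := by
  revert G; decide

lemma DivHyperconvex.exists_of_two {X : Type*} [DecidableEq X] {δ : Finset X → ℝ}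
    (hhc : DivHyperconvex δ) {C E : Finset X} {r s : ℝ}
    (hr : 0 ≤ r) (hs : 0 ≤ s) (hC : δ C ≤ r) (hE : δ E ≤ s) (hCE : δ (C ∪ E) ≤ r + s) :
    ∃ z, δ (C ∪ {z}) ≤ r ∧ δ (E ∪ {z}) ≤ s := by
  obtain ⟨z, hz⟩ := hhc (ULift Bool) (fun b => if b.down then C else E)
    (fun b => if b.down then r else s) (by rintro ⟨_ | _⟩ <;> simpa) (by
      intro G hG
      rcases ULift.bool_finset_nonempty_cases G hG with rfl | rfl | rfl <;> simpa)
  exact ⟨z, by simpa using hz ⟨true⟩, by simpa using hz ⟨false⟩⟩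

section Ddelta

variable {X : Type*} [DecidableEq X] (δ : Finset X → ℝ) (A B : Finset X)

lemma Ddelta_nonneg : 0 ≤ Ddelta δ A B := le_max_right _ _

lemma sub_sub_le_Ddelta : δ (A ∪ B) - δ A - δ B ≤ Ddelta δ A B := le_max_left _ _

end Ddelta

namespace IsDiversity

variable {X : Type*} [DecidableEq X] {δ : Finset X → ℝ}

lemma Ddelta_le_of_mem_Bset (hδ : IsDiversity δ) {A B : Finset X} {x y : X}
    (hx : x ∈ Bset δ A) (hy : y ∈ Bset δ B) : Ddelta δ A B ≤ δ {x, y} := by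
  have hAB : δ (A ∪ B) ≤ δ (A ∪ {x}) + δ ({x} ∪ B) := hδ.2.2 A {x} B (by simp)
  have hxB : δ ({x} ∪ B) ≤ δ ({x} ∪ {y}) + δ ({y} ∪ B) := hδ.2.2 {x} {y} B (by simp)
  rw [← Finset.insert_eq x {y}, Finset.union_comm {y}] at hxB
  exact max_le (by linarith [show δ (A ∪ {x}) ≤ δ A from hx, show δ (B ∪ {y}) ≤ δ B from hy])
    (hδ.1 _)

lemma exists_mem_Bset_of_le (hδ : IsDiversity δ) (hhc : DivHyperconvex δ) {A C : Finset X}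
    {s : ℝ} (hs : 0 ≤ s) (hC : δ C ≤ s) (hAC : δ (A ∪ C) ≤ δ A + s) :
    ∃ z ∈ Bset δ A, δ (C ∪ {z}) ≤ s :=
  hhc.exists_of_two (hδ.1 A) hs le_rfl hC hAC

lemma exists_mem_Bset_delta_le_Ddelta (hδ : IsDiversity δ) (hhc : DivHyperconvex δ)
    (A B : Finset X) : ∃ x ∈ Bset δ A, ∃ y ∈ Bset δ B, δ {x, y} ≤ Ddelta δ A B := by
  have hD := Ddelta_nonneg δ A B
  obtain ⟨x, hx, hxB⟩ := hδ.exists_mem_Bset_of_le hhc (A := A) (C := B) (by linarith [hδ.1 B])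
    (le_add_of_nonneg_right hD) (by linarith [sub_sub_le_Ddelta δ A B])
  obtain ⟨y, hy, hxy⟩ := hδ.exists_mem_Bset_of_le hhc (A := B) (C := {x}) hD
    (by rw [(hδ.2.1 _).2 (by simp)]; exact hD) hxB
  exact ⟨x, hx, y, hy, by rwa [Finset.insert_eq]⟩

end IsDiversity

theorem statement18_general {X : Type*} [DecidableEq X] (δ : Finset X → ℝ)
    (hδ : IsDiversity δ) (hhc : DivHyperconvex δ)
    (A B : Finset X) :
    Ddelta δ A B =
      sInf {r : ℝ | ∃ x ∈ Bset δ A, ∃ y ∈ Bset δ B, r = δ {x, y}} := by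
  obtain ⟨x, hx, y, hy, hxy⟩ := hδ.exists_mem_Bset_delta_le_Ddelta hhc A B
  symm
  refine IsLeast.csInf_eq ⟨⟨x, hx, y, hy, ?_⟩, ?_⟩
  · exact le_antisymm (hδ.Ddelta_le_of_mem_Bset hx hy) hxy
  · rintro _ ⟨x', hx', y', hy', rfl⟩
    exact hδ.Ddelta_le_of_mem_Bset hx' hy'

/-- For a hyperconvex diversity, `D_δ(A,B)` is the infimum of the induced
distances between the sets `B_A` and `B_B`. -/
theorem statement18 {X : Type*} [DecidableEq X] (δ : Finset X → ℝ)
    (hδ : IsDiversity δ) (hhc : DivHyperconvex δ)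
    (A B : Finset X) (hA : A.Nonempty) (hB : B.Nonempty) :
    Ddelta δ A B =
      sInf {r : ℝ | ∃ x ∈ Bset δ A, ∃ y ∈ Bset δ B, r = δ {x, y}} :=
  statement18_general δ hδ hhc A B
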